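/- In a standard quasi-metric space X,d, the radius map (x,r) ↦ r from the poset of formal balls B(X,d) to ℝ≥0 with the opposite order is Scott-continuous, and for each s ∈ ℝ≥0 the map (x,r) ↦ (x, r+s) is Scott-continuous from B(X,d) to itself. -/

import Mathlib

open scoped ENNReal NNReal Classical

/-- A formal ball: a point together with a non-negative real radius. -/
structure FormalBall (X : Type*) where
  center : X
  radius : ℝ≥0

/-- A quasi-metric on `X`: a `[0,∞]`-valued distance with `d x x = 0`, the triangle
inequality, and `d x y = d y x = 0 → x = y`. -/
structure QuasiMetric (X : Type*) where
  d : X → X → ℝ≥0∞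
  refl : ∀ x, d x x = 0
  triangle : ∀ x y z, d x z ≤ d x y + d y z
  separated : ∀ x y, d x y = 0 → d y x = 0 → x = y

/-- The order on formal balls: `(x,r) ≤ (y,s)` iff `d x y ≤ r - s`
(equivalently `s ≤ r` and `d x y ≤ r - s`). -/
def ballLE {X : Type*} (q : QuasiMetric X) (b c : FormalBall X) : Prop :=
  c.radius ≤ b.radius ∧ q.d b.center c.center ≤ ↑(b.radius - c.radius)

/-- The partial order of formal balls `B(X,d)`. -/
def ballOrder {X : Type*} (q : QuasiMetric X) : PartialOrder (FormalBall X) where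
  le := ballLE q
  le_refl b := ⟨le_rfl, by simp [ballLE, q.refl]⟩
  le_trans a b c hab hbc := ⟨hbc.1.trans hab.1, by
    calc q.d a.center c.center ≤ q.d a.center b.center + q.d b.center c.center :=
          q.triangle _ _ _
      _ ≤ ↑(a.radius - b.radius) + ↑(b.radius - c.radius) := add_le_add hab.2 hbc.2
      _ = ↑(a.radius - c.radius) := by
          rw [← ENNReal.coe_add, tsub_add_tsub_cancel hab.1 hbc.1]⟩
  le_antisymm a b hab hba := by
    have hr : b.radius = a.radius := le_antisymm hab.1 hba.1
    have h1 : q.d a.center b.center = 0 := le_antisymm (by simpa [hr] using hab.2) bot_le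
    have h2 : q.d b.center a.center = 0 := le_antisymm (by simpa [hr] using hba.2) bot_le
    have hc := q.separated _ _ h1 h2
    cases a; cases b; simp_all

/-- Standardness: a directed family of formal balls has a supremum iff the family with all
radii uniformly shifted by `s` has one. -/
def Standard {X : Type*} (q : QuasiMetric X) : Prop :=
  letI := ballOrder q
  ∀ S : Set (FormalBall X), S.Nonempty → DirectedOn (· ≤ ·) S → ∀ s : ℝ≥0,
    ((∃ b, IsLUB S b) ↔
      ∃ b, IsLUB ((fun c : FormalBall X => FormalBall.mk c.center (c.radius + s)) '' S) b)


/-! Shifting radii by `s` is an order embedding of `B(X,d)`, inverted by `(x,r) ↦ (x,r-s)` on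
balls of radius at least `s`. So if `S` has supremum `b` and its shift has some supremum `b'`
(which standardness provides), then `b'` and the shift of `b` bound each other. For the radius
map, a directed `S` whose radii are all `≥ t` is the `t`-shift of a directed family, whose
supremum (again by standardness) shifts to the supremum of `S`, which therefore has radius
`≥ t`. -/

namespace FormalBall

variable {X : Type*}

def shift (s : ℝ≥0) (b : FormalBall X) : FormalBall X := ⟨b.center, b.radius + s⟩

def unshift (s : ℝ≥0) (b : FormalBall X) : FormalBall X := ⟨b.center, b.radius - s⟩

lemma shift_unshift {s : ℝ≥0} {b : FormalBall X} (hs : s ≤ b.radius) :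
    shift s (unshift s b) = b := by
  simp [shift, unshift, tsub_add_cancel_of_le hs]

variable (q : QuasiMetric X)

lemma shift_le_shift_iff {s : ℝ≥0} {b c : FormalBall X} :
    letI := ballOrder q
    shift s b ≤ shift s c ↔ b ≤ c := by
  show ballLE q _ _ ↔ ballLE q _ _
  simp [ballLE, shift, add_tsub_add_eq_tsub_right]

lemma unshift_le_unshift_iff {s : ℝ≥0} {b c : FormalBall X} (hb : s ≤ b.radius)
    (hc : s ≤ c.radius) :
    letI := ballOrder q
    unshift s b ≤ unshift s c ↔ b ≤ c := by
  rw [← shift_le_shift_iff q, shift_unshift hb, shift_unshift hc]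

lemma isLUB_shift_image {s : ℝ≥0} {S : Set (FormalBall X)} {b : FormalBall X}
    (hb : letI := ballOrder q; IsLUB S b)
    (hS : letI := ballOrder q; ∃ b', IsLUB (shift s '' S) b') :
    letI := ballOrder q
    IsLUB (shift s '' S) (shift s b) := by
  let := ballOrder q
  obtain ⟨b', hb'⟩ := hS
  have hub : shift s b ∈ upperBounds (shift s '' S) := by
    rintro _ ⟨c, hc, rfl⟩
    exact (shift_le_shift_iff q).2 (hb.1 hc)
  have hle : b' ≤ shift s b := hb'.2 hub
  have hs : s ≤ b'.radius := le_add_self.trans hle.1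
  have hub' : unshift s b' ∈ upperBounds S := fun c hc =>
    (shift_le_shift_iff q).1 <| (shift_unshift hs).symm ▸ hb'.1 (Set.mem_image_of_mem _ hc)
  have hge : shift s b ≤ b' := shift_unshift hs ▸ (shift_le_shift_iff q).2 (hb.2 hub')
  rwa [le_antisymm hge hle]

variable {q}

lemma scottContinuous_shift (hstd : Standard q) (s : ℝ≥0) :
    letI := ballOrder q
    ScottContinuous (shift (X := X) s) :=
  fun S hne hdir _ hb => isLUB_shift_image q hb ((hstd S hne hdir s).1 ⟨_, hb⟩)

lemma le_radius_of_isLUB (hstd : Standard q) {S : Set (FormalBall X)} (hne : S.Nonempty)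
    (hdir : letI := ballOrder q; DirectedOn (· ≤ ·) S) {b : FormalBall X}
    (hb : letI := ballOrder q; IsLUB S b) {t : ℝ≥0} (ht : ∀ c ∈ S, t ≤ c.radius) :
    t ≤ b.radius := by
  let := ballOrder q
  have hshift : shift t '' (unshift t '' S) = S := by
    rw [Set.image_image, Set.image_congr fun c hc => shift_unshift (ht c hc), Set.image_id']
  have hdir' : DirectedOn (· ≤ ·) (unshift t '' S) :=
    directedOn_image.2 <| hdir.mono' fun c hc c' hc' =>
      (unshift_le_unshift_iff q (ht c hc) (ht c' hc')).2
  have hlub : ∃ b', IsLUB (shift t '' (unshift t '' S)) b' := by rw [hshift]; exact ⟨b, hb⟩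
  obtain ⟨b', hb'⟩ := (hstd _ (hne.image _) hdir' t).2 hlub
  have hb_eq : shift t b' = b := by
    have := isLUB_shift_image q hb' hlub
    rw [hshift] at this
    exact this.unique hb
  exact hb_eq ▸ le_add_self

lemma scottContinuous_toDual_radius (hstd : Standard q) :
    letI := ballOrder q
    ScottContinuous fun b : FormalBall X => OrderDual.toDual b.radius := by
  let := ballOrder q
  intro S hne hdir b hb
  constructor
  · rintro _ ⟨c, hc, rfl⟩
    exact (hb.1 hc).1
  · intro t ht
    exact le_radius_of_isLUB hstd hne hdir hb fun c hc => ht (Set.mem_image_of_mem _ hc)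

end FormalBall

/-- in a standard quasi-metric space, the radius map into `ℝ≥0` with the
opposite order is Scott-continuous, and so is each radius shift `(x,r) ↦ (x,r+s)`. -/
theorem radius_and_shift_scottContinuous {X : Type*} (q : QuasiMetric X)
    (hstd : Standard q) :
    letI := ballOrder q
    ScottContinuous (fun b : FormalBall X => OrderDual.toDual b.radius) ∧
      ∀ s : ℝ≥0,
        ScottContinuous (fun b : FormalBall X => FormalBall.mk b.center (b.radius + s)) := by
  exact ⟨FormalBall.scottContinuous_toDual_radius hstd, FormalBall.scottContinuous_shift hstd⟩
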